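/- arXiv:2604.03921 — 2 statements merged into one kernel-verified Lean document; each statement's English description precedes it below -/
import Mathlib

section
/- Consider a directed graph on nodes {0,1,…,m} with nonnegative weights, where for each unit i ∈ {1,…,m}, Σ_{j∈N_i} w_{ij} + w_{i0} = 1 (the balance condition). Suppose every node i ∈ {1,…,m} is reachable from node 0 along directed edges, and y ∈ ℝ^m satisfies y_i = Σ_{j∈N_i, j≠0} w_{ij} y_j + w_{i0}·c for all i, where c ∈ ℝ. Then y_i = c for all i ∈ {1,…,m}. -/
open Finset

/-- Node `i` (a unit) is reachable from the source node `0`: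
there is a unit `k` receiving directly from the source and a directed path of
positive-weight unit-to-unit edges from `k` to `i` (an edge `j → i` exists when
`w i j > 0`, i.e. `i` receives information from `j`). -/
def ReachableFromSource {m : ℕ} (w : Fin m → Fin m → ℝ) (w0 : Fin m → ℝ)
    (i : Fin m) : Prop :=
  ∃ k, 0 < w0 k ∧ Relation.ReflTransGen (fun j i' => 0 < w i' j) k i

/-!
The deviation `e = y - c` satisfies the homogeneous equation `e i = ∑ j, w i j * e j`.
Discrete maximum principle: at a node where `e` attains a positive maximum `M`, the balance
condition writes `M` as a convex combination of the values `e j ≤ M` and of the source value `0`,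
so the source weight vanishes there and every in-neighbour also attains `M`. Walking back along
a path from a node fed by the source reaches a node with positive source weight, a contradiction.
Hence `e ≤ 0`, and `e ≥ 0` by symmetry.
-/

section MaximumPrinciple

variable {ι : Type*} [Fintype ι]

theorem eq_max_on_support_of_sum_mul_eq_max (p : ι → ℝ) (q : ℝ) (e : ι → ℝ) (M : ℝ)
    (hp : ∀ j, 0 ≤ p j) (hq : 0 ≤ q) (hsum : (∑ j, p j) + q = 1)
    (hle : ∀ j, e j ≤ M) (hM : 0 < M) (he : M = ∑ j, p j * e j) :
    q = 0 ∧ ∀ j, 0 < p j → e j = M := by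
  have hgap_nonneg : ∀ j ∈ univ, 0 ≤ p j * (M - e j) :=
    fun j _ => mul_nonneg (hp j) (sub_nonneg.2 (hle j))
  have hgap_sum : ∑ j, p j * (M - e j) = -(q * M) := by
    calc ∑ j, p j * (M - e j) = (∑ j, p j) * M - ∑ j, p j * e j := by
          simp only [mul_sub, sum_sub_distrib, ← sum_mul]
      _ = -(q * M) := by rw [← he]; linear_combination M * hsum
  have hqM : 0 ≤ q * M := mul_nonneg hq hM.le
  have hgap_zero : ∑ j, p j * (M - e j) = 0 :=
    le_antisymm (by linarith) (sum_nonneg hgap_nonneg)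
  refine ⟨(mul_eq_zero.1 (by linarith : q * M = 0)).resolve_right hM.ne', fun j hj => ?_⟩
  have hj_gap := (sum_eq_zero_iff_of_nonneg hgap_nonneg).1 hgap_zero j (mem_univ j)
  linarith [(mul_eq_zero.1 hj_gap).resolve_left hj.ne']

variable (w : ι → ι → ℝ) (w0 : ι → ℝ)

theorem nonpos_of_forall_eq_sum_mul (hw : ∀ i j, 0 ≤ w i j) (hw0 : ∀ i, 0 ≤ w0 i)
    (hbal : ∀ i, (∑ j, w i j) + w0 i = 1)
    (hreach : ∀ i, ∃ k, 0 < w0 k ∧ Relation.ReflTransGen (fun j i' => 0 < w i' j) k i)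
    (e : ι → ℝ) (he : ∀ i, e i = ∑ j, w i j * e j) (i : ι) : e i ≤ 0 := by
  obtain ⟨a, -, ha⟩ := exists_max_image univ e ⟨i, mem_univ i⟩
  by_contra! hi
  have hpos : 0 < e a := hi.trans_le (ha i (mem_univ i))
  have hattain : ∀ b, e b = e a → w0 b = 0 ∧ ∀ j, 0 < w b j → e j = e a := fun b hb =>
    eq_max_on_support_of_sum_mul_eq_max (w b) (w0 b) e (e a) (hw b) (hw0 b) (hbal b)
      (fun j => ha j (mem_univ j)) hpos (hb ▸ he b)
  obtain ⟨k, hk, hka⟩ := hreach a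
  have hk_max : e k = e a := by
    clear hk
    induction hka using Relation.ReflTransGen.head_induction_on with
    | refl => rfl
    | head hjk _ ih => exact (hattain _ ih).2 _ hjk
  exact hk.ne' (hattain k hk_max).1

theorem eq_zero_of_forall_eq_sum_mul (hw : ∀ i j, 0 ≤ w i j) (hw0 : ∀ i, 0 ≤ w0 i)
    (hbal : ∀ i, (∑ j, w i j) + w0 i = 1)
    (hreach : ∀ i, ∃ k, 0 < w0 k ∧ Relation.ReflTransGen (fun j i' => 0 < w i' j) k i)
    (e : ι → ℝ) (he : ∀ i, e i = ∑ j, w i j * e j) (i : ι) : e i = 0 := by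
  have hneg : ∀ i, (-e) i = ∑ j, w i j * (-e) j := fun i => by
    simp only [Pi.neg_apply, mul_neg, sum_neg_distrib, he i]
  exact le_antisymm (nonpos_of_forall_eq_sum_mul w w0 hw hw0 hbal hreach e he i)
    (neg_nonpos.1 (nonpos_of_forall_eq_sum_mul w w0 hw hw0 hbal hreach (-e) hneg i))

end MaximumPrinciple

theorem consensus_from_balance_and_reachability (m : ℕ)
    (w : Fin m → Fin m → ℝ) (w0 : Fin m → ℝ)
    (hw : ∀ i j, 0 ≤ w i j) (hw0 : ∀ i, 0 ≤ w0 i)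
    (hbal : ∀ i, (∑ j, w i j) + w0 i = 1)
    (hreach : ∀ i, ReachableFromSource w w0 i)
    (y : Fin m → ℝ) (c : ℝ)
    (hfix : ∀ i, y i = (∑ j, w i j * y j) + w0 i * c) :
    ∀ i, y i = c := by
  have hdev : ∀ i, y i - c = ∑ j, w i j * (y j - c) := fun i => by
    simp only [mul_sub, sum_sub_distrib, ← sum_mul]
    linear_combination hfix i + c * hbal i
  exact fun i => sub_eq_zero.1
    (eq_zero_of_forall_eq_sum_mul w w0 hw hw0 hbal hreach (fun i => y i - c) hdev i)
end

section
/- Let ε : ℝ≥0 → ℝ^n be a C¹ solution of ε̇ = Mε + Dv with v ∈ L²([0,∞), ℝ^m), ε(0) = 0. Suppose there exists a symmetric positive definite P such that for all (ε, v) ≠ 0, εᵀ(PM + MᵀP)ε + 2εᵀPDv + ‖ε‖² - δ²‖v‖² < 0. Then ∫₀^∞ ‖ε(t)‖² dt ≤ δ² ∫₀^∞ ‖v(t)‖² dt. -/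
/-!
The storage function `V(t) = ε(t)ᵀ P ε(t)` is nonnegative, vanishes at `t = 0`, and by the
matrix inequality its derivative along trajectories is at most `δ²‖v‖² - ‖ε‖²`. Integrating over
`[0, T]` gives `∫₀ᵀ ‖ε‖² ≤ δ² ∫₀ᵀ ‖v‖²`; these partial integrals are uniformly bounded, so `‖ε‖²` is
integrable on `(0, ∞)` and the bound passes to the limit `T → ∞`.
-/

open Matrix MeasureTheory Set Filter

theorem HasDerivAt.dotProduct_mulVec {ι : Type*} [Fintype ι] {x : ℝ → ι → ℝ} {x' : ι → ℝ}
    {t : ℝ} (A : Matrix ι ι ℝ) (hx : HasDerivAt x x' t) :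
    HasDerivAt (fun s => x s ⬝ᵥ A *ᵥ x s) (x' ⬝ᵥ A *ᵥ x t + x t ⬝ᵥ A *ᵥ x') t := by
  have hAx : HasDerivAt (fun s => A *ᵥ x s) (A *ᵥ x') t :=
    (Matrix.mulVecLin A).toContinuousLinearMap.hasFDerivAt.comp_hasDerivAt t hx
  have := HasDerivAt.fun_sum (u := Finset.univ) fun i _ =>
    (hasDerivAt_pi.1 hx i).fun_mul (hasDerivAt_pi.1 hAx i)
  simpa only [dotProduct, Finset.sum_add_distrib] using this

theorem Matrix.IsSymm.dotProduct_mulVec_comm {ι : Type*} [Fintype ι] {P : Matrix ι ι ℝ}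
    (hP : P.IsSymm) (x y : ι → ℝ) : x ⬝ᵥ P *ᵥ y = y ⬝ᵥ P *ᵥ x := by
  rw [dotProduct_mulVec, ← mulVec_transpose, hP.eq, dotProduct_comm]

theorem Matrix.IsSymm.lyapunov_derivative_eq {ι κ : Type*} [Fintype ι] [Fintype κ]
    {P : Matrix ι ι ℝ} (hP : P.IsSymm) (M : Matrix ι ι ℝ) (D : Matrix ι κ ℝ)
    (e : ι → ℝ) (w : κ → ℝ) :
    (M *ᵥ e + D *ᵥ w) ⬝ᵥ P *ᵥ e + e ⬝ᵥ P *ᵥ (M *ᵥ e + D *ᵥ w)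
      = e ⬝ᵥ (P * M + Mᵀ * P) *ᵥ e + 2 * (e ⬝ᵥ (P * D) *ᵥ w) := by
  have hMt : e ⬝ᵥ (Mᵀ * P) *ᵥ e = e ⬝ᵥ (P * M) *ᵥ e := by
    rw [← mulVec_mulVec, dotProduct_mulVec, vecMul_transpose, hP.dotProduct_mulVec_comm,
      mulVec_mulVec]
  rw [hP.dotProduct_mulVec_comm _ e, add_mulVec, dotProduct_add, hMt, ← mulVec_mulVec,
    ← mulVec_mulVec, mulVec_add, dotProduct_add]
  ring

theorem intervalIntegral_le_of_hasDerivAt_le {V V' f g : ℝ → ℝ} {a b : ℝ} (hab : a ≤ b)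
    (hV : V a ≤ V b) (hderiv : ∀ t ∈ Icc a b, HasDerivAt V (V' t) t)
    (hsupply : ∀ t ∈ Icc a b, V' t ≤ g t - f t)
    (hf : IntegrableOn f (Icc a b)) (hg : IntegrableOn g (Icc a b)) :
    ∫ t in a..b, f t ≤ ∫ t in a..b, g t := by
  have hstorage : V b - V a ≤ ∫ t in a..b, (g t - f t) :=
    intervalIntegral.sub_le_integral_of_hasDeriv_right_of_le hab
      (fun t ht => (hderiv t ht).continuousAt.continuousWithinAt)
      (fun t ht => (hderiv t (Ioo_subset_Icc_self ht)).hasDerivWithinAt) (hg.sub hf)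
      (fun t ht => hsupply t (Ioo_subset_Icc_self ht))
  rw [intervalIntegral.integral_sub ((intervalIntegrable_iff_integrableOn_Icc_of_le hab).2 hg)
    ((intervalIntegrable_iff_integrableOn_Icc_of_le hab).2 hf)] at hstorage
  linarith

theorem setIntegral_Ioi_le_of_intervalIntegral_le {f g : ℝ → ℝ} {a : ℝ} (hf₀ : ∀ t, 0 ≤ f t)
    (hf : ∀ b, IntegrableOn f (Ioc a b)) (hg : IntegrableOn g (Ioi a))
    (hfg : ∀ b, a ≤ b → ∫ t in a..b, f t ≤ ∫ t in a..b, g t) :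
    ∫ t in Ioi a, f t ≤ ∫ t in Ioi a, g t := by
  have hfi : IntegrableOn f (Ioi a) := by
    refine integrableOn_Ioi_of_intervalIntegral_norm_bounded (∫ t in Ioi a, ‖g t‖) a hf
      tendsto_id ((eventually_ge_atTop a).mono fun b hab => ?_)
    calc ∫ t in a..b, ‖f t‖ = ∫ t in a..b, f t := by simp only [Real.norm_of_nonneg (hf₀ _)]
      _ ≤ ∫ t in a..b, g t := hfg b hab
      _ ≤ ∫ t in a..b, ‖g t‖ :=
        (Real.le_norm_self _).trans (intervalIntegral.norm_integral_le_integral_norm hab)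
      _ ≤ ∫ t in Ioi a, ‖g t‖ := by
        rw [intervalIntegral.integral_of_le hab]
        exact setIntegral_mono_set hg.norm (.of_forall fun _ => norm_nonneg _)
          Ioc_subset_Ioi_self.eventuallyLE
  exact le_of_tendsto_of_tendsto (intervalIntegral_tendsto_integral_Ioi a hfi tendsto_id)
    (intervalIntegral_tendsto_integral_Ioi a hg tendsto_id) ((eventually_ge_atTop a).mono hfg)

theorem setIntegral_Ioi_le_of_dissipation {V V' f g : ℝ → ℝ} {a : ℝ}
    (hV : ∀ t, a ≤ t → V a ≤ V t) (hderiv : ∀ t, a ≤ t → HasDerivAt V (V' t) t)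
    (hsupply : ∀ t, a ≤ t → V' t ≤ g t - f t) (hf₀ : ∀ t, 0 ≤ f t)
    (hf : ContinuousOn f (Ici a)) (hg : IntegrableOn g (Ioi a)) :
    ∫ t in Ioi a, f t ≤ ∫ t in Ioi a, g t := by
  have hf_Icc : ∀ b, IntegrableOn f (Icc a b) := fun b =>
    (hf.mono Icc_subset_Ici_self).integrableOn_Icc
  refine setIntegral_Ioi_le_of_intervalIntegral_le hf₀
    (fun b => (hf_Icc b).mono_set Ioc_subset_Icc_self) hg fun b hab => ?_
  refine intervalIntegral_le_of_hasDerivAt_le hab (hV b hab) (fun t ht => hderiv t ht.1)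
    (fun t ht => hsupply t ht.1) (hf_Icc b) ?_
  rw [integrableOn_Icc_iff_integrableOn_Ioc]
  exact hg.mono_set Ioc_subset_Ioi_self

theorem EuclideanSpace.norm_sq_eq_dotProduct {ι : Type*} [Fintype ι] (x : EuclideanSpace ℝ ι) :
    ‖x‖ ^ 2 = x.ofLp ⬝ᵥ x.ofLp := by
  rw [← real_inner_self_eq_norm_sq, EuclideanSpace.inner_eq_star_dotProduct, star_trivial]

theorem hinf_l2_gain_general (n m : ℕ)
    (M : Matrix (Fin n) (Fin n) ℝ) (D : Matrix (Fin n) (Fin m) ℝ) (δ : ℝ)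
    (ε : ℝ → EuclideanSpace ℝ (Fin n)) (v : ℝ → EuclideanSpace ℝ (Fin m))
    (hode : ∀ t, 0 ≤ t →
      HasDerivAt ε (WithLp.toLp 2 (M.mulVec (ε t) + D.mulVec (v t)) : EuclideanSpace ℝ (Fin n)) t)
    (hinit : ε 0 = 0)
    (hv : IntegrableOn (fun t => ‖v t‖ ^ 2) (Ioi 0))
    (P : Matrix (Fin n) (Fin n) ℝ) (hP : P.PosDef)
    (hdissip : ∀ (e : Fin n → ℝ) (w : Fin m → ℝ), ¬(e = 0 ∧ w = 0) →
      e ⬝ᵥ (P * M + Mᵀ * P).mulVec e + 2 * (e ⬝ᵥ (P * D).mulVec w)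
        + e ⬝ᵥ e - δ ^ 2 * (w ⬝ᵥ w) < 0) :
    ∫ t in Ioi (0 : ℝ), ‖ε t‖ ^ 2 ≤ δ ^ 2 * ∫ t in Ioi (0 : ℝ), ‖v t‖ ^ 2 := by
  have hPsymm : P.IsSymm := hP.1
  have hsupply : ∀ e w, e ⬝ᵥ (P * M + Mᵀ * P) *ᵥ e + 2 * (e ⬝ᵥ (P * D) *ᵥ w)
      ≤ δ ^ 2 * (w ⬝ᵥ w) - e ⬝ᵥ e := by
    intro e w
    by_cases h : e = 0 ∧ w = 0
    · simp [h.1, h.2]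
    · linarith [hdissip e w h]
  have hε : ∀ t, 0 ≤ t → HasDerivAt (fun s => (ε s).ofLp) (M *ᵥ ε t + D *ᵥ v t) t :=
    fun t ht => (PiLp.continuousLinearEquiv 2 ℝ (fun _ : Fin n => ℝ)).hasFDerivAt.comp_hasDerivAt
      t (hode t ht)
  rw [← integral_const_mul]
  refine setIntegral_Ioi_le_of_dissipation (V := fun t => (ε t).ofLp ⬝ᵥ P *ᵥ (ε t).ofLp)
    (fun t _ => ?_) (fun t ht => (hε t ht).dotProduct_mulVec P) (fun t _ => ?_)
    (fun t => sq_nonneg ‖ε t‖) ?_ (hv.const_mul _)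
  · simpa [hinit] using hP.posSemidef.dotProduct_mulVec_nonneg (ε t).ofLp
  · rw [hPsymm.lyapunov_derivative_eq, EuclideanSpace.norm_sq_eq_dotProduct,
      EuclideanSpace.norm_sq_eq_dotProduct]
    exact hsupply _ _
  · exact fun t ht => ((hode t ht).continuousAt.norm.pow 2).continuousWithinAt

theorem hinf_l2_gain (n m : ℕ)
    (M : Matrix (Fin n) (Fin n) ℝ) (D : Matrix (Fin n) (Fin m) ℝ) (δ : ℝ)
    (hδ : 0 < δ)
    (ε : ℝ → EuclideanSpace ℝ (Fin n)) (v : ℝ → EuclideanSpace ℝ (Fin m))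
    (hode : ∀ t, 0 ≤ t →
      HasDerivAt ε (WithLp.toLp 2 (M.mulVec (ε t) + D.mulVec (v t)) : EuclideanSpace ℝ (Fin n)) t)
    (hinit : ε 0 = 0)
    (hv : IntegrableOn (fun t => ‖v t‖ ^ 2) (Ioi 0))
    (P : Matrix (Fin n) (Fin n) ℝ) (hP : P.PosDef)
    (hdissip : ∀ (e : Fin n → ℝ) (w : Fin m → ℝ), ¬(e = 0 ∧ w = 0) →
      e ⬝ᵥ (P * M + Mᵀ * P).mulVec e + 2 * (e ⬝ᵥ (P * D).mulVec w)
        + e ⬝ᵥ e - δ ^ 2 * (w ⬝ᵥ w) < 0) :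
    ∫ t in Ioi (0 : ℝ), ‖ε t‖ ^ 2 ≤ δ ^ 2 * ∫ t in Ioi (0 : ℝ), ‖v t‖ ^ 2 :=
  hinf_l2_gain_general n m M D δ ε v hode hinit hv P hP hdissip
end
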